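/- arXiv:2212.11849 — 4 statements merged into one kernel-verified Lean document; each statement's English description precedes it below -/
import Mathlib

section
/- For the implicit midpoint rule applied to the scalar linear test problem u' = λu with low-precision perturbation, one step of the mixed-precision method with c explicit corrections satisfies u^{n+1} = φ(z) u^n + (z/2)^{c+1}/(1 - z/2) · q, where z = λΔt, φ(z) = (1 + z/2)/(1 - z/2) is the standard implicit midpoint stability function, and q is the (step-dependent) rounding error term; i.e., the coefficient multiplying the rounding error is (z/2)^{c+1}/(1 - z/2). -/
/-!
With `w = z/2`, the predictor satisfies `(1 - w) y⁰ - uⁿ = q/2`, and each explicit correction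
`y ↦ uⁿ + w y` multiplies the defect `(1 - w) y - uⁿ` by `w`, so `(1 - w) y^[c] - uⁿ = w^c q/2`.
Substituting into `uⁿ⁺¹ = uⁿ + 2w y^[c]` and dividing by `1 - w` gives the formula.
-/

theorem one_sub_mul_sub_eq_pow_mul_of_affine_step {R : Type*} [CommRing R] {u w : R}
    {y : ℕ → R} {c : ℕ} (h : ∀ k < c, y (k + 1) = u + w * y k) :
    (1 - w) * y c - u = w ^ c * ((1 - w) * y 0 - u) := by
  induction c with
  | zero => ring
  | succ c ih =>
    have hc := h c c.lt_succ_self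
    have ih := ih fun k hk => h k (hk.trans c.lt_succ_self)
    linear_combination (1 - w) * hc + w * ih

/-- Mixed-precision implicit midpoint rule with `c` explicit corrections applied to
`u' = λ u` with low-precision perturbation `ε τ`: one step satisfies
`u^{n+1} = φ(z) u^n + (z/2)^(c+1)/(1 - z/2) · q` with `z = λ Δt`, `q = Δt ε τ`. -/
theorem mixed_precision_IMR_one_step
    (lam dt eps tau u : ℝ) (c : ℕ) (y : ℕ → ℝ)
    (hz : lam * dt ≠ 2)
    (h0 : y 0 = u + dt / 2 * (lam * y 0 + eps * tau))
    (hk : ∀ k < c, y (k + 1) = u + dt / 2 * (lam * y k)) :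
    u + dt * (lam * y c) =
      (1 + lam * dt / 2) / (1 - lam * dt / 2) * u +
        (lam * dt / 2) ^ (c + 1) / (1 - lam * dt / 2) * (dt * eps * tau) := by
  have hw_ne : 1 - lam * dt / 2 ≠ 0 := fun h => hz (by linarith)
  set w := lam * dt / 2
  have hpredictor : (1 - w) * y 0 - u = dt / 2 * (eps * tau) := by
    linear_combination h0
  have hdefect := one_sub_mul_sub_eq_pow_mul_of_affine_step (u := u) (w := w) (y := y)
    fun k hk' => by rw [hk k hk']; ring
  rw [div_mul_eq_mul_div, div_mul_eq_mul_div, ← add_div, eq_div_iff hw_ne]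
  linear_combination (dt * lam) * hdefect + (dt * lam * w ^ c) * hpredictor
end

section
/- For an s-stage additive Runge–Kutta method applied to the perturbed Dahlquist problem u' = λu (high precision) and u' = λu + ετ (low precision), one step satisfies u^{n+1} = (1 + Ψ e) u^n + Δt ε Ψ A^ε T, where Ψ = z b (I - z Ã)^{-1} with z = λΔt, Ã = A + A^ε, provided b^ε = 0, T is the vector of stage roundoff terms, and I - z Ã is invertible. -/
/-!
Collecting the implicit terms, the stage equations form the linear system
`(I - z Ã) Y = uⁿ e + Δt ε A^ε T` with `z = λΔt` and `Ã = A + A^ε`. Inverting `I - z Ã` and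
substituting into `uⁿ⁺¹ = uⁿ + z b Y` gives the update.
-/

open Matrix

namespace AdditiveRK

variable {n R : Type*} [Fintype n] [DecidableEq n] [CommRing R]

theorem stage_system_mulVec (A Aeps : Matrix n n R) (lam dt eps u : R) (T Y : n → R)
    (hY : ∀ i, Y i = u + dt * (A *ᵥ fun j => lam * Y j) i
        + dt * (Aeps *ᵥ fun j => lam * Y j + eps * T j) i) :
    (1 - (dt * lam) • (A + Aeps)) *ᵥ Y = u • (fun _ => 1) + (dt * eps) • (Aeps *ᵥ T) := by
  have hlamY : (fun j => lam * Y j) = lam • Y := rfl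
  have hmix : (fun j => lam * Y j + eps * T j) = lam • Y + eps • T := rfl
  funext i
  simp only [hlamY, hmix, mulVec_add, mulVec_smul, Pi.add_apply, Pi.smul_apply,
    smul_eq_mul] at hY
  simp only [sub_mulVec, one_mulVec, smul_mulVec, add_mulVec, Pi.sub_apply, Pi.smul_apply,
    Pi.add_apply, smul_eq_mul]
  rw [hY i]
  ring

theorem dotProduct_eq_of_mulVec_eq {M : Matrix n n R} (hM : IsUnit M) {Y w : n → R}
    (hMY : M *ᵥ Y = w) (b : n → R) : b ⬝ᵥ Y = (b ᵥ* M⁻¹) ⬝ᵥ w := by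
  have := hM.invertible
  rw [← dotProduct_mulVec, inv_mulVec_eq_vec hMY.symm]

end AdditiveRK

theorem additive_RK_perturbed_dahlquist_one_step_general
    {s : ℕ} (A Aeps : Matrix (Fin s) (Fin s) ℝ) (b : Fin s → ℝ)
    (lam dt eps u : ℝ) (T Y : Fin s → ℝ)
    (hinv : IsUnit (1 - (dt * lam) • (A + Aeps)))
    (hY : ∀ i, Y i = u + dt * (A *ᵥ fun j => lam * Y j) i
        + dt * (Aeps *ᵥ fun j => lam * Y j + eps * T j) i) :
    u + dt * (b ⬝ᵥ fun j => lam * Y j) =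
      (1 + ((dt * lam) • (b ᵥ* (1 - (dt * lam) • (A + Aeps))⁻¹)) ⬝ᵥ (fun _ => (1 : ℝ))) * u
        + dt * eps *
          (((dt * lam) • (b ᵥ* (1 - (dt * lam) • (A + Aeps))⁻¹)) ⬝ᵥ (Aeps *ᵥ T)) := by
  have hbY := AdditiveRK.dotProduct_eq_of_mulVec_eq hinv
    (AdditiveRK.stage_system_mulVec A Aeps lam dt eps u T Y hY) b
  have hlamY : (fun j => lam * Y j) = lam • Y := rfl
  rw [hlamY, dotProduct_smul, hbY]
  simp only [dotProduct_add, dotProduct_smul, smul_dotProduct, smul_eq_mul]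
  ring

/-- One step of an `s`-stage additive RK method on the perturbed Dahlquist problem
(`u' = λu` in high precision, `u' = λu + ετ` in low precision), with `b^ε = 0`:
`u^{n+1} = (1 + Ψ e) u^n + Δt ε Ψ A^ε T`, where `Ψ = z b (I - z Ã)⁻¹`, `z = λΔt`,
`Ã = A + A^ε`. -/
theorem additive_RK_perturbed_dahlquist_one_step
    {s : ℕ} (A Aeps : Matrix (Fin s) (Fin s) ℝ) (b : Fin s → ℝ)
    (lam dt eps u : ℝ) (T Y : Fin s → ℝ) (hT : ∀ i, |T i| ≤ 1 / 2)
    (hinv : IsUnit (1 - (dt * lam) • (A + Aeps)))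
    (hY : ∀ i, Y i = u + dt * (A *ᵥ fun j => lam * Y j) i
        + dt * (Aeps *ᵥ fun j => lam * Y j + eps * T j) i) :
    u + dt * (b ⬝ᵥ fun j => lam * Y j) =
      (1 + ((dt * lam) • (b ᵥ* (1 - (dt * lam) • (A + Aeps))⁻¹)) ⬝ᵥ (fun _ => (1 : ℝ))) * u
        + dt * eps *
          (((dt * lam) • (b ᵥ* (1 - (dt * lam) • (A + Aeps))⁻¹)) ⬝ᵥ (Aeps *ᵥ T)) :=
  additive_RK_perturbed_dahlquist_one_step_general A Aeps b lam dt eps u T Y hinv hY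
end

section
/- For a mixed-precision additive RK method written in perturbed form with coefficients (Ã, b̃, A^ε, b^ε) applied to a smooth ODE u' = F(u) with perturbation F - F^ε = ετ, the one-step expansion is u^{n+1} = u^n + Δt b̃ e F(u^n) + Δt² b̃ c̃ F_y(u^n)F(u^n) + εΔt[b^ε e τ(u^n)] + εΔt²[b^ε c̃ τ_y F + b̃ c^ε F_y τ + ε b^ε c^ε τ_y τ](u^n) + O(Δt³), where c̃ = Ã e and c^ε = A^ε e. -/
open Asymptotics Filter
lemma taylor2_bound (G : ℝ → ℝ) (hG : ContDiff ℝ 2 G) (u : ℝ) :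
    ∃ C : ℝ, 0 ≤ C ∧ ∃ δ > (0:ℝ), ∀ x, |x - u| ≤ δ →
      |G x - G u - deriv G u * (x - u)| ≤ C * (x - u) ^ 2 := by
  have hd : ContDiff ℝ 1 (deriv G) := (contDiff_succ_iff_deriv.mp (by exact_mod_cast hG)).2.2
  obtain ⟨K, t, ht, hK⟩ := (hd.contDiffAt : ContDiffAt ℝ 1 (deriv G) u).exists_lipschitzOnWith
  obtain ⟨δ, hδ, hball⟩ := Metric.mem_nhds_iff.mp ht
  refine ⟨K, K.coe_nonneg, δ/2, by positivity, fun x hx => ?_⟩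
  set r := |x - u| with hr
  have hr0 : 0 ≤ r := abs_nonneg _
  have hsub : Metric.closedBall u r ⊆ t := fun z hz => hball (by
    have : dist z u ≤ r := Metric.mem_closedBall.mp hz
    exact Metric.mem_ball.mpr (lt_of_le_of_lt this (lt_of_le_of_lt hx (by linarith))))
  have hdiff : Differentiable ℝ G := hG.differentiable (by norm_num)
  have key := Convex.norm_image_sub_le_of_norm_hasDerivWithin_le
    (f := fun z => G z - deriv G u * z) (f' := fun z => deriv G z - deriv G u)
    (s := Metric.closedBall u r) (C := K * r)
    (fun z hz => ((hdiff z).hasDerivAt.sub ((hasDerivAt_id z).const_mul (deriv G u))).hasDerivWithinAt.congr_deriv (by ring))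
    (fun z hz => by
      have hzt : z ∈ t := hsub hz
      have hut : u ∈ t := hsub (Metric.mem_closedBall_self hr0)
      have := hK.dist_le_mul z hzt u hut
      have hzd : dist z u ≤ r := Metric.mem_closedBall.mp hz
      calc ‖deriv G z - deriv G u‖ = dist (deriv G z) (deriv G u) := (dist_eq_norm _ _).symm
        _ ≤ K * dist z u := this
        _ ≤ K * r := by exact mul_le_mul_of_nonneg_left hzd K.coe_nonneg)
    (convex_closedBall u r)
    (Metric.mem_closedBall_self hr0)
    (Metric.mem_closedBall.mpr (by rw [Real.dist_eq]))
  have : ‖(G x - deriv G u * x) - (G u - deriv G u * u)‖ ≤ K * r * ‖x - u‖ := key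
  calc |G x - G u - deriv G u * (x - u)|
      = ‖(G x - deriv G u * x) - (G u - deriv G u * u)‖ := by rw [Real.norm_eq_abs]; ring_nf
    _ ≤ K * r * ‖x - u‖ := this
    _ = K * (x - u) ^ 2 := by rw [Real.norm_eq_abs, ← hr, hr, ← sq_abs]; ring

/-- If `φ → 0`, `φ =O[l] h`, and `G` is C², then the first-order Taylor remainder
of `G` along `u + φ` is `O(h²)`. -/
lemma taylor2_isBigO {G : ℝ → ℝ} (hG : ContDiff ℝ 2 G) {u : ℝ}
    {φ : ℝ → ℝ} (hφ0 : Tendsto φ (nhds 0) (nhds 0))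
    (hφ : φ =O[nhds (0:ℝ)] (fun h => h)) :
    (fun h => G (u + φ h) - G u - deriv G u * φ h) =O[nhds (0:ℝ)] (fun h => h ^ 2) := by
  obtain ⟨C, hC0, δ, hδ, hbound⟩ := taylor2_bound G hG u
  have h1 : (fun h => G (u + φ h) - G u - deriv G u * φ h) =O[nhds (0:ℝ)]
      (fun h => (φ h) ^ 2) := by
    rw [isBigO_iff]
    refine ⟨C, ?_⟩
    have hev : ∀ᶠ h in nhds (0:ℝ), |φ h| ≤ δ := by
      have := hφ0.eventually (eventually_of_mem (Metric.closedBall_mem_nhds (0:ℝ) hδ)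
        (fun z hz => hz))
      filter_upwards [this] with h hh
      simpa [Real.dist_eq] using hh
    filter_upwards [hev] with h hh
    have := hbound (u + φ h) (by simpa using hh)
    simpa [Real.norm_eq_abs, abs_of_nonneg (sq_nonneg (φ h))] using this
  have h2 : (fun h => (φ h) ^ 2) =O[nhds (0:ℝ)] (fun h : ℝ => h ^ 2) := by
    have := hφ.mul hφ
    simpa [sq] using this
  exact h1.trans h2

/-- Second-order one-step expansion of a mixed-precision additive RK method in
perturbed form `(Ã, b̃, A^ε, b^ε)` applied to a smooth scalar ODE `u' = F(u)`
with perturbation `τ`: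
`u^{n+1} = u^n + Δt b̃e F + Δt² b̃c̃ F_y F + εΔt b^ε e τ
  + εΔt² (b^ε c̃ τ_y F + b̃ c^ε F_y τ + ε b^ε c^ε τ_y τ) + O(Δt³)`. -/
theorem perturbed_ARK_second_order_expansion
    {s : ℕ} (At Aeps : Matrix (Fin s) (Fin s) ℝ) (bt beps : Fin s → ℝ)
    (F tauf : ℝ → ℝ) (hF : ContDiff ℝ 2 F) (htau : ContDiff ℝ 2 tauf)
    (u eps : ℝ) (y : ℝ → Fin s → ℝ)
    (hy : ∀ h i, y h i = u + h * ∑ j, At i j * F (y h j)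
        + eps * h * ∑ j, Aeps i j * tauf (y h j))
    (hycont : ∀ i, ContinuousAt (fun h => y h i) 0) :
    (fun h : ℝ =>
        (u + h * ∑ j, bt j * F (y h j) + eps * h * ∑ j, beps j * tauf (y h j))
          - (u
            + h * (∑ j, bt j) * F u
            + h ^ 2 * (∑ j, bt j * (∑ k, At j k)) * (deriv F u * F u)
            + eps * h * (∑ j, beps j) * tauf u
            + eps * h ^ 2 *
              ((∑ j, beps j * (∑ k, At j k)) * (deriv tauf u * F u)
                + (∑ j, bt j * (∑ k, Aeps j k)) * (deriv F u * tauf u)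
                + eps * (∑ j, beps j * (∑ k, Aeps j k)) * (deriv tauf u * tauf u))))
      =O[nhds 0] (fun h : ℝ => h ^ 3) := by
  -- limits of the stages
  have hy0 : ∀ i, y 0 i = u := fun i => by simpa using hy 0 i
  have tendy : ∀ i, Tendsto (fun h => y h i) (nhds 0) (nhds u) := fun i => by
    have := (hycont i).tendsto
    rwa [hy0 i] at this
  set g : Fin s → ℝ := fun i => (∑ k, At i k) * F u + eps * (∑ k, Aeps i k) * tauf u with hg
  -- first order: y h i - u = O(h)
  have O1 : ∀ i, (fun h => y h i - u) =O[nhds (0:ℝ)] (fun h => h) := by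
    intro i
    have hQ : Tendsto (fun h => (∑ j, At i j * F (y h j))
        + eps * (∑ j, Aeps i j * tauf (y h j))) (nhds 0)
        (nhds ((∑ j, At i j * F u) + eps * (∑ j, Aeps i j * tauf u))) := by
      apply Tendsto.add
      · exact tendsto_finset_sum _ fun j _ =>
          ((hF.continuous.tendsto u).comp (tendy j)).const_mul _
      · exact (tendsto_finset_sum _ fun j _ =>
          ((htau.continuous.tendsto u).comp (tendy j)).const_mul _).const_mul _
    have hQO := hQ.isBigO_one ℝ
    have := (isBigO_refl (fun h : ℝ => h) (nhds 0)).mul hQO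
    refine this.congr (fun h => ?_) (fun h => mul_one h)
    rw [hy h i]; ring
  -- Taylor remainders along the stages
  have TF : ∀ i, (fun h => F (y h i) - F u - deriv F u * (y h i - u))
      =O[nhds (0:ℝ)] (fun h : ℝ => h ^ 2) := fun i => by
    have := taylor2_isBigO hF (u := u) (φ := fun h => y h i - u)
      (by simpa using (tendy i).sub_const u) (O1 i)
    have eq : ∀ h, u + (y h i - u) = y h i := fun h => by ring
    simpa only [eq] using this
  have Tτ : ∀ i, (fun h => tauf (y h i) - tauf u - deriv tauf u * (y h i - u))
      =O[nhds (0:ℝ)] (fun h : ℝ => h ^ 2) := fun i => by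
    have := taylor2_isBigO htau (u := u) (φ := fun h => y h i - u)
      (by simpa using (tendy i).sub_const u) (O1 i)
    have eq : ∀ h, u + (y h i - u) = y h i := fun h => by ring
    simpa only [eq] using this
  -- h² = O(h) near 0
  have hsq : (fun h : ℝ => h ^ 2) =O[nhds (0:ℝ)] (fun h => h) := by
    have h1 : (fun h : ℝ => h) =O[nhds (0:ℝ)] (fun _ => (1:ℝ)) := tendsto_id.isBigO_one ℝ
    simpa [sq] using (isBigO_refl (fun h : ℝ => h) (nhds 0)).mul h1
  -- F(y h i) - F u = O(h), same for τ
  have FO1 : ∀ i, (fun h => F (y h i) - F u) =O[nhds (0:ℝ)] (fun h => h) := fun i => by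
    have := ((TF i).trans hsq).add ((O1 i).const_mul_left (deriv F u))
    refine this.congr_left fun h => by ring
  have τO1 : ∀ i, (fun h => tauf (y h i) - tauf u) =O[nhds (0:ℝ)] (fun h => h) := fun i => by
    have := ((Tτ i).trans hsq).add ((O1 i).const_mul_left (deriv tauf u))
    refine this.congr_left fun h => by ring
  -- second order: y h i - u - h * g i = O(h²)
  have O2 : ∀ i, (fun h => y h i - u - h * g i) =O[nhds (0:ℝ)] (fun h : ℝ => h ^ 2) := by
    intro i
    have hin : (fun h => (∑ j, At i j * (F (y h j) - F u))
        + eps * (∑ j, Aeps i j * (tauf (y h j) - tauf u))) =O[nhds (0:ℝ)] (fun h => h) := by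
      refine IsBigO.add ?_ (IsBigO.const_mul_left ?_ _)
      · exact (IsBigO.sum fun j _ => (FO1 j).const_mul_left (At i j)).congr_left fun h => Finset.sum_apply h _ _
      · exact (IsBigO.sum fun j _ => (τO1 j).const_mul_left (Aeps i j)).congr_left fun h => Finset.sum_apply h _ _
    have := (isBigO_refl (fun h : ℝ => h) (nhds 0)).mul hin
    refine this.congr (fun h => ?_) (fun h => by ring)
    have k1 : ∑ j, At i j * (F (y h j) - F u)
        = (∑ j, At i j * F (y h j)) - (∑ j, At i j) * F u := by
      simp [mul_sub, Finset.sum_sub_distrib, Finset.sum_mul]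
    have k2 : ∑ j, Aeps i j * (tauf (y h j) - tauf u)
        = (∑ j, Aeps i j * tauf (y h j)) - (∑ j, Aeps i j) * tauf u := by
      simp [mul_sub, Finset.sum_sub_distrib, Finset.sum_mul]
    rw [hy h i, hg, k1, k2]
    ring
  -- full stage remainders: G(y h i) - G u - h * deriv G u * g i = O(h²)
  have RF : ∀ i, (fun h => F (y h i) - F u - h * (deriv F u * g i))
      =O[nhds (0:ℝ)] (fun h : ℝ => h ^ 2) := fun i => by
    have := (TF i).add ((O2 i).const_mul_left (deriv F u))
    exact this.congr_left fun h => by ring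
  have Rτ : ∀ i, (fun h => tauf (y h i) - tauf u - h * (deriv tauf u * g i))
      =O[nhds (0:ℝ)] (fun h : ℝ => h ^ 2) := fun i => by
    have := (Tτ i).add ((O2 i).const_mul_left (deriv tauf u))
    exact this.congr_left fun h => by ring
  -- assemble
  have sumF : (fun h => ∑ j, bt j * (F (y h j) - F u - h * (deriv F u * g j)))
      =O[nhds (0:ℝ)] (fun h : ℝ => h ^ 2) :=
    (IsBigO.sum fun j _ => (RF j).const_mul_left (bt j)).congr_left fun h => Finset.sum_apply h _ _
  have sumτ : (fun h => ∑ j, beps j * (tauf (y h j) - tauf u - h * (deriv tauf u * g j)))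
      =O[nhds (0:ℝ)] (fun h : ℝ => h ^ 2) :=
    (IsBigO.sum fun j _ => (Rτ j).const_mul_left (beps j)).congr_left fun h => Finset.sum_apply h _ _
  have big : (fun h : ℝ => h * (∑ j, bt j * (F (y h j) - F u - h * (deriv F u * g j)))
      + eps * (h * (∑ j, beps j * (tauf (y h j) - tauf u - h * (deriv tauf u * g j)))))
      =O[nhds (0:ℝ)] (fun h : ℝ => h ^ 3) := by
    have t1 := (isBigO_refl (fun h : ℝ => h) (nhds 0)).mul sumF
    have t2 := ((isBigO_refl (fun h : ℝ => h) (nhds 0)).mul sumτ).const_mul_left eps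
    have := t1.add t2
    exact this.congr_right fun h => by ring
  refine big.congr_left fun h => ?_
  -- pointwise algebraic identity
  have keyF : ∑ j, bt j * (F (y h j) - F u - h * (deriv F u * g j))
      = (∑ j, bt j * F (y h j)) - (∑ j, bt j) * F u
        - h * deriv F u * F u * (∑ j, bt j * (∑ k, At j k))
        - h * deriv F u * (eps * tauf u) * (∑ j, bt j * (∑ k, Aeps j k)) := by
    rw [Finset.sum_congr rfl (fun j _ => show
        bt j * (F (y h j) - F u - h * (deriv F u * g j))
          = bt j * F (y h j) - bt j * F u
            - h * deriv F u * F u * (bt j * (∑ k, At j k))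
            - h * deriv F u * (eps * tauf u) * (bt j * (∑ k, Aeps j k)) from by
      rw [hg]; ring)]
    simp only [Finset.sum_sub_distrib, Finset.sum_mul, Finset.mul_sum]
  have keyτ : ∑ j, beps j * (tauf (y h j) - tauf u - h * (deriv tauf u * g j))
      = (∑ j, beps j * tauf (y h j)) - (∑ j, beps j) * tauf u
        - h * deriv tauf u * F u * (∑ j, beps j * (∑ k, At j k))
        - h * deriv tauf u * (eps * tauf u) * (∑ j, beps j * (∑ k, Aeps j k)) := by
    rw [Finset.sum_congr rfl (fun j _ => show
        beps j * (tauf (y h j) - tauf u - h * (deriv tauf u * g j))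
          = beps j * tauf (y h j) - beps j * tauf u
            - h * deriv tauf u * F u * (beps j * (∑ k, At j k))
            - h * deriv tauf u * (eps * tauf u) * (beps j * (∑ k, Aeps j k)) from by
      rw [hg]; ring)]
    simp only [Finset.sum_sub_distrib, Finset.sum_mul, Finset.mul_sum]
  rw [keyF, keyτ]
  ring
end

section
/- For the implicit midpoint rule with m-1 correction stages applied to a Lipschitz ODE, the difference over one step between the corrected mixed-precision scheme and the fully high-precision scheme satisfies |u^{n+1}_{mixed} - u^{n+1}_{full}| ≤ (L Δt/2)^{m} · Δt · (Lip constant factor) · |initial stage perturbation|, i.e., each correction multiplies the one-step perturbation error by a factor of at most LΔt/2. -/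
/-! The correction stages of the full and the mixed scheme iterate the same map
`y ↦ uⁿ + (Δt/2) F(y)`, which is `LΔt/2`-Lipschitz; only the starting stage differs.
Hence the stage difference contracts by `LΔt/2` per correction, and the final update
`uⁿ + Δt F(y)` is `LΔt`-Lipschitz. -/

section

variable {E G : Type*} [SeminormedAddCommGroup E] [SeminormedAddCommGroup G] [NormedSpace ℝ G]

theorem norm_add_smul_sub_add_smul_le {F : E → G} {L : ℝ}
    (hLip : ∀ x y, ‖F x - F y‖ ≤ L * ‖x - y‖) (u : G) (c : ℝ) (x y : E) :
    ‖(u + c • F x) - (u + c • F y)‖ ≤ |c| * L * ‖x - y‖ := by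
  rw [add_sub_add_left_eq_sub, ← smul_sub, norm_smul, Real.norm_eq_abs, mul_assoc]
  exact mul_le_mul_of_nonneg_left (hLip x y) (abs_nonneg c)

theorem norm_sub_le_pow_mul_of_recurrence {g : E → E} {K : ℝ} (hK : 0 ≤ K)
    (hg : ∀ a b, ‖g a - g b‖ ≤ K * ‖a - b‖) {x y : ℕ → E}
    (hx : ∀ k, x (k + 1) = g (x k)) (hy : ∀ k, y (k + 1) = g (y k)) (k : ℕ) :
    ‖x k - y k‖ ≤ K ^ k * ‖x 0 - y 0‖ := by
  induction k with
  | zero => simp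
  | succ k ih =>
    calc ‖x (k + 1) - y (k + 1)‖ ≤ K * ‖x k - y k‖ := by rw [hx, hy]; exact hg _ _
      _ ≤ K * (K ^ k * ‖x 0 - y 0‖) := mul_le_mul_of_nonneg_left ih hK
      _ = K ^ (k + 1) * ‖x 0 - y 0‖ := by ring

end

theorem IMR_corrections_damp_perturbation_general
    {d : ℕ} (F : (Fin d → ℝ) → (Fin d → ℝ)) (L dt : ℝ)
    (hL : 0 ≤ L) (hdt : 0 ≤ dt)
    (hLip : ∀ x y : Fin d → ℝ, ‖F x - F y‖ ≤ L * ‖x - y‖)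
    (u : Fin d → ℝ) (ymix yfull : ℕ → Fin d → ℝ) (m : ℕ)
    (hmix : ∀ k, ymix (k + 1) = u + (dt / 2) • F (ymix k))
    (hfull : ∀ k, yfull (k + 1) = u + (dt / 2) • F (yfull k)) :
    (∀ k, ‖ymix k - yfull k‖ ≤ (L * dt / 2) ^ k * ‖ymix 0 - yfull 0‖) ∧
    ‖(u + dt • F (ymix (m - 1))) - (u + dt • F (yfull (m - 1)))‖ ≤
      L * dt * (L * dt / 2) ^ (m - 1) * ‖ymix 0 - yfull 0‖ := by
  have hstage : ∀ a b, ‖(u + (dt / 2) • F a) - (u + (dt / 2) • F b)‖ ≤ L * dt / 2 * ‖a - b‖ := by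
    intro a b
    have := norm_add_smul_sub_add_smul_le hLip u (dt / 2) a b
    rwa [abs_of_nonneg (by positivity), mul_comm (dt / 2), ← mul_div_assoc] at this
  have hstages := norm_sub_le_pow_mul_of_recurrence (by positivity) hstage hmix hfull
  refine ⟨hstages, ?_⟩
  calc ‖(u + dt • F (ymix (m - 1))) - (u + dt • F (yfull (m - 1)))‖
      ≤ |dt| * L * ‖ymix (m - 1) - yfull (m - 1)‖ := norm_add_smul_sub_add_smul_le hLip u dt _ _
    _ ≤ dt * L * ((L * dt / 2) ^ (m - 1) * ‖ymix 0 - yfull 0‖) := by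
        rw [abs_of_nonneg hdt]
        gcongr
        exact hstages _
    _ = L * dt * (L * dt / 2) ^ (m - 1) * ‖ymix 0 - yfull 0‖ := by ring

/-- Each explicit correction stage of the implicit midpoint rule multiplies the
one-step perturbation error by a factor of at most `LΔt/2`: for an `L`-Lipschitz `F`,
`|y^{(1)}_{[k],mixed} - y^{(1)}_{[k],full}| ≤ (LΔt/2)^k δ` for all `k`, and the
one-step difference between the mixed scheme with `m-1` corrections and the full
scheme is `≤ L Δt (LΔt/2)^{m-1} δ`, where `δ` is the initial stage perturbation. -/
theorem IMR_corrections_damp_perturbation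
    {d : ℕ} (F Feps : (Fin d → ℝ) → (Fin d → ℝ)) (L dt : ℝ)
    (hL : 0 ≤ L) (hdt : 0 ≤ dt)
    (hLip : ∀ x y : Fin d → ℝ, ‖F x - F y‖ ≤ L * ‖x - y‖)
    (u : Fin d → ℝ) (ymix yfull : ℕ → Fin d → ℝ) (m : ℕ) (hm : 1 ≤ m)
    (hmix0 : ymix 0 = u + (dt / 2) • Feps (ymix 0))
    (hfull0 : yfull 0 = u + (dt / 2) • F (yfull 0))
    (hmix : ∀ k, ymix (k + 1) = u + (dt / 2) • F (ymix k))
    (hfull : ∀ k, yfull (k + 1) = u + (dt / 2) • F (yfull k)) :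
    (∀ k, ‖ymix k - yfull k‖ ≤ (L * dt / 2) ^ k * ‖ymix 0 - yfull 0‖) ∧
    ‖(u + dt • F (ymix (m - 1))) - (u + dt • F (yfull (m - 1)))‖ ≤
      L * dt * (L * dt / 2) ^ (m - 1) * ‖ymix 0 - yfull 0‖ :=
  IMR_corrections_damp_perturbation_general F L dt hL hdt hLip u ymix yfull m hmix hfull
end
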